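/- Let G be a finitely generated nilpotent group of class at most 2 (i.e., G' ⊆ Z(G)) such that G' is cyclic and G/Z(G) is finite. Then every class-preserving automorphism of G is inner, i.e., Aut_c(G) = Inn(G). -/

import Mathlib

/-- The group of class-preserving automorphisms of `G`. -/
def AutC (G : Type*) [Group G] : Subgroup (MulAut G) where
  carrier := {α | ∀ g : G, ∃ h : G, α g = h * g * h⁻¹}
  one_mem' := by intro g; exact ⟨1, by simp⟩
  mul_mem' := by
    intro α β hα hβ g
    obtain ⟨k, hk⟩ := hβ g
    obtain ⟨m, hm⟩ := hα g
    refine ⟨α k * m, ?_⟩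
    show α (β g) = _
    rw [hk, map_mul, map_mul, map_inv, hm]
    group
  inv_mem' := by
    intro α hα g
    obtain ⟨h, hh⟩ := hα (α⁻¹ g)
    rw [MulAut.apply_inv_self] at hh
    refine ⟨h⁻¹, ?_⟩
    calc α⁻¹ g = h⁻¹ * (h * α⁻¹ g * h⁻¹) * h := by group
      _ = h⁻¹ * g * h := by rw [← hh]
      _ = h⁻¹ * g * (h⁻¹)⁻¹ := by rw [inv_inv]

/-- The group of inner automorphisms of `G`. -/
def Inn (G : Type*) [Group G] : Subgroup (MulAut G) :=
  (MulAut.conj : G →* MulAut G).range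

/-! Since `G' ≤ Z(G)`, the commutator pairing `(hZ, gZ) ↦ ⁅h, g⁆` on `G/Z(G)` is bimultiplicative
with trivial left kernel. Embedding the finite cyclic group `G'` into `ℂˣ`, it becomes an injection
`G/Z(G) ↪ Hom(G/Z(G), ℂˣ)`, and the target has at most `|G/Z(G)|` elements, so it is a bijection.
A class-preserving `α` gives the homomorphism `gZ(G) ↦ α(g) g⁻¹` into `G'`; hence there is `b` with
`α(g) g⁻¹ = ⁅b, g⁆` for all `g`, i.e. `α` is conjugation by `b`. -/

open scoped commutatorElement
open Subgroup (center mem_center_iff)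

section Commutators

variable {G : Type*} [Group G]

theorem commutatorElement_mem_commutator (g h : G) : ⁅g, h⁆ ∈ commutator G :=
  Subgroup.commutator_mem_commutator (Subgroup.mem_top g) (Subgroup.mem_top h)

theorem commutatorElement_mul_left_of_mem_center {z : G} (hz : z ∈ center G) (g h : G) :
    ⁅g * z, h⁆ = ⁅g, h⁆ := by
  rw [commutatorElement_def, commutatorElement_def, mul_assoc g z h, ← mem_center_iff.mp hz h]
  group

theorem commutatorElement_mul_right_of_mem_center {z : G} (hz : z ∈ center G) (g h : G) :
    ⁅g, h * z⁆ = ⁅g, h⁆ := by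
  rw [← inv_inj, commutatorElement_inv, commutatorElement_inv,
    commutatorElement_mul_left_of_mem_center hz]

theorem finite_commutatorSet_of_finite_quotient_center [Finite (G ⧸ center G)] :
    Finite (commutatorSet G) := by
  refine Set.Finite.to_subtype <|
    (Set.finite_range fun p : (G ⧸ center G) × (G ⧸ center G) ↦ ⁅p.1.out, p.2.out⁆).subset ?_
  rintro _ ⟨g, h, rfl⟩
  obtain ⟨z, hz⟩ := QuotientGroup.mk_out_eq_mul (center G) g
  obtain ⟨w, hw⟩ := QuotientGroup.mk_out_eq_mul (center G) h
  exact ⟨(g, h), by simp only [hz, hw, commutatorElement_mul_left_of_mem_center z.2,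
    commutatorElement_mul_right_of_mem_center w.2]⟩

theorem commutatorElement_mul_left_of_commutator_le_center (hG : commutator G ≤ center G)
    (g₁ g₂ h : G) : ⁅g₁ * g₂, h⁆ = ⁅g₁, h⁆ * ⁅g₂, h⁆ := by
  have central := mem_center_iff.mp (hG (commutatorElement_mem_commutator g₂ h))
  rw [commutatorElement_mul_left_eq_conj_mul, central, mul_inv_cancel_right, central]

theorem commutatorElement_mul_right_of_commutator_le_center (hG : commutator G ≤ center G)
    (g h₁ h₂ : G) : ⁅g, h₁ * h₂⁆ = ⁅g, h₁⁆ * ⁅g, h₂⁆ := by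
  have central := mem_center_iff.mp (hG (commutatorElement_mem_commutator g h₂))
  rw [commutatorElement_mul_right_eq_mul_conj, mul_assoc _ h₁, central, ← mul_assoc,
    mul_inv_cancel_right]

end Commutators

theorem card_monoidHom_units_complex_le (A : Type*) [Group A] [Finite A] :
    Nat.card (A →* ℂˣ) ≤ Nat.card A := by
  have : NeZero (Monoid.exponent (Abelianization A) : ℂ) :=
    ⟨Nat.cast_ne_zero.mpr Monoid.exponent_ne_zero_of_finite⟩
  calc Nat.card (A →* ℂˣ) = Nat.card (Abelianization A →* ℂˣ) :=
        Nat.card_congr Abelianization.lift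
    _ = Nat.card (Abelianization A) :=
        CommGroup.card_monoidHom_of_hasEnoughRootsOfUnity _ ℂ
    _ ≤ Nat.card A := Nat.card_le_card_of_surjective _ QuotientGroup.mk_surjective

theorem IsCyclic.exists_injective_monoidHom_units_complex (C : Type*) [Group C] [IsCyclic C]
    [Finite C] : ∃ ι : C →* ℂˣ, Function.Injective ι := by
  have : NeZero (Nat.card C) := ⟨Nat.card_pos.ne'⟩
  let e : C ≃* rootsOfUnity (Nat.card C) ℂ :=
    mulEquivOfCyclicCardEq (Complex.card_rootsOfUnity _).symm
  exact ⟨(rootsOfUnity _ ℂ).subtype.comp e.toMonoidHom, Subtype.val_injective.comp e.injective⟩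

section ClassTwo

variable {G : Type*} [Group G] {M : Type*} [CommGroup M]

def commutatorPairing (hG : commutator G ≤ center G) (ι : commutator G →* M) :
    G ⧸ center G →* G ⧸ center G →* M :=
  QuotientGroup.lift (center G)
    { toFun h := QuotientGroup.lift (center G)
        (MonoidHom.mk' (fun g ↦ ι ⟨⁅h, g⁆, commutatorElement_mem_commutator h g⟩) fun g₁ g₂ ↦
          (congrArg ι (Subtype.ext
            (commutatorElement_mul_right_of_commutator_le_center hG h g₁ g₂))).trans (map_mul ..))
        fun z hz ↦ (congrArg ι (Subtype.ext (commutatorElement_eq_one_iff_commute.mpr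
          (mem_center_iff.mp hz h)))).trans (map_one ι)
      map_one' := by
        ext g
        exact (congrArg ι (Subtype.ext (commutatorElement_one_left g))).trans (map_one ι)
      map_mul' h₁ h₂ := by
        ext g
        exact (congrArg ι (Subtype.ext
          (commutatorElement_mul_left_of_commutator_le_center hG h₁ h₂ g))).trans (map_mul ..) }
    fun z hz ↦ by
      ext g
      exact (congrArg ι (Subtype.ext (commutatorElement_eq_one_iff_commute.mpr
        (mem_center_iff.mp hz g).symm))).trans (map_one ι)

theorem commutatorPairing_mk_mk (hG : commutator G ≤ center G) (ι : commutator G →* M)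
    (h g : G) :
    commutatorPairing hG ι h g = ι ⟨⁅h, g⁆, commutatorElement_mem_commutator h g⟩ :=
  rfl

theorem commutatorPairing_injective (hG : commutator G ≤ center G) {ι : commutator G →* M}
    (hι : Function.Injective ι) : Function.Injective (commutatorPairing hG ι) := by
  rw [injective_iff_map_eq_one]
  intro a ha
  obtain ⟨h, rfl⟩ := QuotientGroup.mk_surjective a
  rw [QuotientGroup.eq_one_iff, mem_center_iff]
  intro g
  have : (⟨⁅h, g⁆, commutatorElement_mem_commutator h g⟩ : commutator G) = 1 :=
    hι (by rw [map_one, ← commutatorPairing_mk_mk hG, ha, MonoidHom.one_apply])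
  exact (commutatorElement_eq_one_iff_commute.mp (congrArg Subtype.val this)).eq.symm

end ClassTwo

section AutC

variable {G : Type*} [Group G]

theorem inn_le_autC : Inn G ≤ AutC G := by
  rintro _ ⟨h, rfl⟩ g
  exact ⟨h, MulAut.conj_apply h g⟩

theorem mul_inv_mem_commutator_of_mem_autC {α : MulAut G} (hα : α ∈ AutC G) (g : G) :
    α g * g⁻¹ ∈ commutator G := by
  obtain ⟨h, hh⟩ := hα g
  rw [hh]
  exact commutatorElement_mem_commutator h g

theorem apply_eq_self_of_mem_autC {α : MulAut G} (hα : α ∈ AutC G) {z : G}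
    (hz : z ∈ center G) : α z = z := by
  obtain ⟨h, hh⟩ := hα z
  rw [hh, mem_center_iff.mp hz h, mul_inv_cancel_right]

def autCDisplacement (hG : commutator G ≤ center G) {α : MulAut G} (hα : α ∈ AutC G) :
    G ⧸ center G →* commutator G :=
  QuotientGroup.lift (center G)
    (MonoidHom.mk' (fun g ↦ ⟨α g * g⁻¹, mul_inv_mem_commutator_of_mem_autC hα g⟩) fun g k ↦ by
      have central := mem_center_iff.mp (hG (mul_inv_mem_commutator_of_mem_autC hα k))
      ext
      calc α (g * k) * (g * k)⁻¹ = α g * ((α k * k⁻¹) * g⁻¹) := by simp only [map_mul]; group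
        _ = α g * g⁻¹ * (α k * k⁻¹) := by rw [← central, mul_assoc])
    fun z hz ↦ Subtype.ext (by simp [apply_eq_self_of_mem_autC hα hz])

theorem autCDisplacement_mk (hG : commutator G ≤ center G) {α : MulAut G} (hα : α ∈ AutC G)
    (g : G) : (autCDisplacement hG hα g : G) = α g * g⁻¹ :=
  rfl

theorem exists_mul_inv_eq_commutatorElement_of_mem_autC (hG : commutator G ≤ center G)
    [IsCyclic (commutator G)] [Finite (G ⧸ center G)] {α : MulAut G} (hα : α ∈ AutC G) :
    ∃ b : G, ∀ g, α g * g⁻¹ = ⁅b, g⁆ := by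
  -- Schur: finitely many commutators, hence `G'` is finite
  have := finite_commutatorSet_of_finite_quotient_center (G := G)
  obtain ⟨ι, hι⟩ := IsCyclic.exists_injective_monoidHom_units_complex (commutator G)
  have hbij := (commutatorPairing_injective hG hι).bijective_of_nat_card_le
    (card_monoidHom_units_complex_le _)
  obtain ⟨b, hb⟩ := hbij.2 (ι.comp (autCDisplacement hG hα))
  obtain ⟨b, rfl⟩ := QuotientGroup.mk_surjective b
  refine ⟨b, fun g ↦ ?_⟩
  rw [← autCDisplacement_mk hG hα]
  exact congrArg Subtype.val (hι (DFunLike.congr_fun hb (g : G ⧸ center G))).symm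

end AutC

theorem autC_eq_inn (G : Type*) [Group G]
    (h2 : commutator G ≤ Subgroup.center G)
    (hcyc : IsCyclic (commutator G)) (hfin : Finite (G ⧸ Subgroup.center G)) :
    AutC G = Inn G := by
  refine le_antisymm (fun α hα ↦ ?_) inn_le_autC
  obtain ⟨b, hb⟩ := exists_mul_inv_eq_commutatorElement_of_mem_autC h2 hα
  refine ⟨b, MulEquiv.ext fun g ↦ mul_right_cancel (b := g⁻¹) ?_⟩
  rw [MulAut.conj_apply, hb, commutatorElement_def]
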